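/- arXiv:2110.11657 — 3 statements merged into one kernel-verified Lean document; each statement's English description precedes it below -/
import Mathlib

section
/- (Value of τ reaching the ground truth, and τ_converge = 1/4 on SO(3)) Let θ ∈ (0, π), let ω ∈ ℝ³ be a unit vector, and let R_gt = exp(θ ω^∧). The Riemannian gradient of the L2 loss ‖R − R_gt‖_F² at R = I is G := 2(R_gtᵀ − R_gt). If τ = θ / (4 sin θ), then the Riemannian gradient step exp(−τ · G) = R_gt, i.e. a single Riemannian step with step size θ/(4 sin θ) from the identity reaches R_gt exactly. Moreover θ/(4 sin θ) → 1/4 as θ → 0⁺. -/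
/-!
For a unit axis `ω`, the matrix `K = ω^∧` satisfies `K³ = -K`, so the exponential series of
`θ K` collapses to Rodrigues' formula `exp (θ K) = 1 + sin θ K + (1 - cos θ) K²`. Since
`Kᵀ = -K`, transposing flips the sign of `θ`, and the symmetric part cancels:
`R_gtᵀ - R_gt = -2 sin θ K`. Hence `-τ · 2 (R_gtᵀ - R_gt) = 4 τ sin θ K = θ K` exactly when
`τ = θ / (4 sin θ)`. The limit is `1 / (4 sinc t) → 1 / 4`.
-/

open Matrix

/-- The hat map sending `ω ∈ ℝ³` to the skew-symmetric matrix `ω^∧`. -/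
def hat (ω : Fin 3 → ℝ) : Matrix (Fin 3) (Fin 3) ℝ :=
  !![0, -ω 2, ω 1; ω 2, 0, -ω 0; -ω 1, ω 0, 0]

theorem hat_transpose (ω : Fin 3 → ℝ) : (hat ω)ᵀ = -hat ω := by
  ext i j
  fin_cases i <;> fin_cases j <;> simp [hat]

theorem hat_pow_three (ω : Fin 3 → ℝ) :
    hat ω ^ 3 = -(ω 0 ^ 2 + ω 1 ^ 2 + ω 2 ^ 2) • hat ω := by
  ext i j
  fin_cases i <;> fin_cases j <;> simp [hat, pow_succ, Matrix.mul_apply, Fin.sum_univ_succ] <;>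
    ring

section Rodrigues

variable {A : Type*} [Ring A] [Algebra ℝ A] {K : A}

theorem pow_two_mul_add_one_of_pow_three_eq_neg (hK : K ^ 3 = -K) (k : ℕ) :
    K ^ (2 * k + 1) = ((-1 : ℝ) ^ k) • K := by
  induction k with
  | zero => simp
  | succ k ih =>
    rw [show 2 * (k + 1) + 1 = 2 + (2 * k + 1) by ring, pow_add, ih, mul_smul_comm,
      ← pow_succ, hK, pow_succ, smul_neg, mul_neg_one, neg_smul]

theorem pow_two_mul_add_two_of_pow_three_eq_neg (hK : K ^ 3 = -K) (k : ℕ) :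
    K ^ (2 * k + 2) = ((-1 : ℝ) ^ k) • K ^ 2 := by
  rw [pow_succ, pow_two_mul_add_one_of_pow_three_eq_neg hK, smul_mul_assoc, sq]

variable [TopologicalSpace A] [IsTopologicalRing A] [ContinuousSMul ℝ A] [T2Space A]

theorem exp_smul_of_pow_three_eq_neg (hK : K ^ 3 = -K) (θ : ℝ) :
    NormedSpace.exp (θ • K) = 1 + Real.sin θ • K + (1 - Real.cos θ) • K ^ 2 := by
  rw [NormedSpace.exp_eq_tsum ℝ]
  refine HasSum.tsum_eq ?_
  have hodd : HasSum (fun k : ℕ => ((2 * k + 1).factorial⁻¹ : ℝ) • (θ • K) ^ (2 * k + 1))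
      (Real.sin θ • K) := by
    refine ((Real.hasSum_sin θ).smul_const K).congr_fun fun k => ?_
    rw [smul_pow, pow_two_mul_add_one_of_pow_three_eq_neg hK, smul_smul, smul_smul]
    ring_nf
  have hcos_tail : HasSum (fun k : ℕ => (-1 : ℝ) ^ (k + 1) * θ ^ (2 * (k + 1)) /
      (2 * (k + 1)).factorial) (Real.cos θ - 1) :=
    (hasSum_nat_add_iff (f := fun k : ℕ => (-1 : ℝ) ^ k * θ ^ (2 * k) / (2 * k).factorial) 1).mpr
      (by simpa using Real.hasSum_cos θ)
  have heven_tail : HasSum (fun k : ℕ => ((2 * (k + 1)).factorial⁻¹ : ℝ) • (θ • K) ^ (2 * (k + 1)))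
      ((1 - Real.cos θ) • K ^ 2) := by
    refine (neg_sub (Real.cos θ) 1 ▸ hcos_tail.neg.smul_const (K ^ 2)).congr_fun fun k => ?_
    rw [smul_pow, mul_add_one, pow_two_mul_add_two_of_pow_three_eq_neg hK, smul_smul, smul_smul]
    ring_nf
  have heven : HasSum (fun k : ℕ => ((2 * k).factorial⁻¹ : ℝ) • (θ • K) ^ (2 * k))
      (1 + (1 - Real.cos θ) • K ^ 2) := by
    simpa [add_comm] using (hasSum_nat_add_iff
      (f := fun k : ℕ => ((2 * k).factorial⁻¹ : ℝ) • (θ • K) ^ (2 * k)) 1).mp heven_tail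
  rw [add_right_comm]
  exact heven.even_add_odd (f := fun n : ℕ => (n.factorial⁻¹ : ℝ) • (θ • K) ^ n) hodd

end Rodrigues

theorem transpose_exp_smul_hat_sub (θ : ℝ) {ω : Fin 3 → ℝ}
    (hω : ω 0 ^ 2 + ω 1 ^ 2 + ω 2 ^ 2 = 1) :
    (NormedSpace.exp (θ • hat ω))ᵀ - NormedSpace.exp (θ • hat ω) =
      -(2 * Real.sin θ) • hat ω := by
  have hK : hat ω ^ 3 = -hat ω := by rw [hat_pow_three, hω, neg_smul, one_smul]
  rw [← Matrix.exp_transpose, transpose_smul, hat_transpose, smul_neg, ← neg_smul,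
    exp_smul_of_pow_three_eq_neg hK, exp_smul_of_pow_three_eq_neg hK, Real.sin_neg,
    Real.cos_neg]
  module

theorem tendsto_div_four_mul_sin :
    Filter.Tendsto (fun t : ℝ => t / (4 * Real.sin t)) (nhdsWithin 0 (Set.Ioi 0))
      (nhds (1 / 4)) := by
  have hcont : ContinuousAt (fun t => (4 * Real.sinc t)⁻¹) 0 :=
    (continuous_const.mul Real.continuous_sinc).continuousAt.inv₀ (by simp [Real.sinc_zero])
  have hlim := hcont.tendsto.mono_left (nhdsWithin_le_nhds (s := Set.Ioi 0))
  rw [Real.sinc_zero, mul_one, ← one_div] at hlim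
  refine hlim.congr' ?_
  filter_upwards [self_mem_nhdsWithin] with t ht
  rw [Real.sinc_of_ne_zero (ne_of_gt ht)]
  field_simp

/-- For `θ ∈ (0, π)`, a unit axis `ω` and `R_gt = exp (θ ω^∧)`, a single Riemannian
gradient step from the identity on the L2 loss with step size `τ = θ / (4 sin θ)`,
i.e. `exp (-τ · 2(R_gtᵀ - R_gt))`, reaches `R_gt` exactly; moreover
`θ / (4 sin θ) → 1/4` as `θ → 0⁺`. -/
theorem riemannian_step_reaches_gt_and_tau_converge
    (θ : ℝ) (hθ : θ ∈ Set.Ioo 0 Real.pi)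
    (ω : Fin 3 → ℝ) (hω : ω 0 ^ 2 + ω 1 ^ 2 + ω 2 ^ 2 = 1)
    (Rgt : Matrix (Fin 3) (Fin 3) ℝ) (hRgt : Rgt = NormedSpace.exp (θ • hat ω)) :
    NormedSpace.exp (-(θ / (4 * Real.sin θ)) • ((2 : ℝ) • (Rgtᵀ - Rgt))) = Rgt ∧
      Filter.Tendsto (fun t : ℝ => t / (4 * Real.sin t))
        (nhdsWithin 0 (Set.Ioi 0)) (nhds (1 / 4)) := by
  refine ⟨?_, tendsto_div_four_mul_sin⟩
  have hsin : Real.sin θ ≠ 0 := (Real.sin_pos_of_pos_of_lt_pi hθ.1 hθ.2).ne'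
  subst hRgt
  rw [transpose_exp_smul_hat_sub θ hω, smul_smul, smul_smul]
  congr 2
  field_simp
  ring
end

section
/- (Inverse image of SVD orthogonalization is contained in the symmetric multiples of the target rotation) Let U, V be 3×3 real orthogonal matrices (UᵀU = I, VᵀV = I), let Σ be a 3×3 diagonal matrix, and set x = U Σ Vᵀ. Let Σ′ = diag(1, 1, det(UVᵀ)) and R = U Σ′ Vᵀ (the SVD-orthogonalization of x). Then the matrix S = U Σ (Σ′)⁻¹ Uᵀ is symmetric and x = S R. Consequently, every matrix whose SVD orthogonalization equals a given rotation R lies in the set { S R : S a symmetric 3×3 matrix }. -/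
open Matrix

/-!
`S R = U Σ Σ'⁻¹ (Uᵀ U) Σ' Vᵀ` collapses to `U Σ Vᵀ` because `Uᵀ U = 1` and `Σ'` is invertible
(`det Σ' = det U · det V` is a unit). `S` is symmetric because `Σ Σ'⁻¹` is diagonal and
`U D Uᵀ` is symmetric whenever `D` is.
-/

namespace Matrix

variable {m n k α : Type*} [Fintype n]

theorem IsSymm.mul_mul_transpose [CommSemiring α] {B : Matrix n n α} (hB : B.IsSymm)
    (A : Matrix m n α) : (A * B * Aᵀ).IsSymm := by
  rw [IsSymm, transpose_mul, transpose_mul, transpose_transpose, hB.eq, Matrix.mul_assoc]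

theorem isSymm_mul_diagonal_mul_inv_diagonal_mul_transpose [DecidableEq n] [CommRing α]
    (A : Matrix m n α) (d s : n → α) : (A * diagonal d * (diagonal s)⁻¹ * Aᵀ).IsSymm := by
  rw [Matrix.mul_assoc A, inv_diagonal, diagonal_mul_diagonal]
  exact (isSymm_diagonal _).mul_mul_transpose A

theorem mul_mul_eq_mul_inv_mul_transpose_mul [Fintype m] [DecidableEq n] [CommRing α]
    {A : Matrix m n α} (hA : Aᵀ * A = 1) (X : Matrix n n α) {D : Matrix n n α} (hD : IsUnit D.det)
    (W : Matrix n k α) : A * X * W = (A * X * D⁻¹ * Aᵀ) * (A * D * W) :=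
  calc A * X * W = A * X * (D⁻¹ * (Aᵀ * A) * D) * W := by
        rw [hA, Matrix.mul_one, nonsing_inv_mul _ hD, Matrix.mul_one]
    _ = (A * X * D⁻¹ * Aᵀ) * (A * D * W) := by simp only [Matrix.mul_assoc]

end Matrix

/-- **Inverse image of SVD orthogonalization.** Given an SVD `x = U Σ Vᵀ` with
`U, V` orthogonal and `Σ` diagonal, let `Σ' = diag(1, 1, det (U Vᵀ))` and let
`R = U Σ' Vᵀ` be the SVD-orthogonalization of `x`. Then
`S = U Σ (Σ')⁻¹ Uᵀ` is symmetric and `x = S R`; consequently `x` lies in the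
set of symmetric multiples `{ S' R : S' symmetric }` of the rotation `R`. -/
theorem svd_inverse_image_symmetric_multiples
    (U V : Matrix (Fin 3) (Fin 3) ℝ)
    (hU : Uᵀ * U = 1) (hV : Vᵀ * V = 1)
    (d : Fin 3 → ℝ) :
    (U * Matrix.diagonal d * (Matrix.diagonal ![1, 1, (U * Vᵀ).det])⁻¹ * Uᵀ)ᵀ =
        U * Matrix.diagonal d * (Matrix.diagonal ![1, 1, (U * Vᵀ).det])⁻¹ * Uᵀ ∧
      U * Matrix.diagonal d * Vᵀ =
        (U * Matrix.diagonal d * (Matrix.diagonal ![1, 1, (U * Vᵀ).det])⁻¹ * Uᵀ) *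
          (U * Matrix.diagonal ![1, 1, (U * Vᵀ).det] * Vᵀ) ∧
      U * Matrix.diagonal d * Vᵀ ∈
        {y : Matrix (Fin 3) (Fin 3) ℝ |
          ∃ S : Matrix (Fin 3) (Fin 3) ℝ,
            Sᵀ = S ∧ y = S * (U * Matrix.diagonal ![1, 1, (U * Vᵀ).det] * Vᵀ)} := by
  have hUV : IsUnit (U * Vᵀ).det := by
    rw [det_mul]
    exact (isUnit_det_of_left_inverse hU).mul
      (isUnit_det_transpose _ (isUnit_det_of_left_inverse hV))
  have hdiag : IsUnit (diagonal ![1, 1, (U * Vᵀ).det]).det := by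
    simpa only [det_diagonal, Fin.prod_univ_three, Matrix.cons_val, one_mul] using hUV
  have hsymm := (isSymm_mul_diagonal_mul_inv_diagonal_mul_transpose U d
    ![1, 1, (U * Vᵀ).det]).eq
  have hprod := mul_mul_eq_mul_inv_mul_transpose_mul hU (diagonal d) hdiag Vᵀ
  exact ⟨hsymm, hprod, _, hsymm, hprod⟩
end

section
/- (Value of τ reaching the ground truth, and τ_converge = 1/2 on S²) Let x, y ∈ ℝ³ be unit vectors with x · y = cos θ for some θ ∈ (0, π). Then ‖y − (x · y) x‖ = sin θ. Moreover, let g = 2((x · y) x − y) be the Riemannian gradient of ‖x − y‖² at x, and set τ = θ/(2 sin θ) and v = −τ g. Then v · x = 0, v ≠ 0, and the Riemannian gradient step exp_x(v) = cos(‖v‖) x + sin(‖v‖) v/‖v‖ equals y exactly. Finally θ/(2 sin θ) → 1/2 as θ → 0⁺. -/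
/-!
The component `y - ⟪x, y⟫ • x` of `y` orthogonal to `x` has length `sin θ`, and the gradient step
`v` is `θ` times its normalisation `u`. Hence `exp_x v = cos θ • x + sin θ • u`, the point at arc
length `θ` along the great circle from `x` towards `y`, which is `y`. The limit is that of
`(2 sinc t)⁻¹`, since `sinc` is continuous with `sinc 0 = 1`.
-/

open RealInnerProductSpace Real Filter Topology

section

variable {E : Type*} [NormedAddCommGroup E] [InnerProductSpace ℝ E] {x y : E}

theorem norm_sub_inner_smul_sq (hx : ‖x‖ = 1) (hy : ‖y‖ = 1) :
    ‖y - ⟪x, y⟫ • x‖ ^ 2 = 1 - ⟪x, y⟫ ^ 2 := by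
  rw [norm_sub_sq_real, norm_smul, real_inner_smul_right, real_inner_comm x y, hx, hy,
    Real.norm_eq_abs, mul_one, sq_abs]
  ring

theorem norm_sub_inner_smul_eq_sin (hx : ‖x‖ = 1) (hy : ‖y‖ = 1) {θ : ℝ}
    (hxy : ⟪x, y⟫ = cos θ) (hθ : 0 ≤ sin θ) : ‖y - ⟪x, y⟫ • x‖ = sin θ := by
  rw [← sq_eq_sq₀ (norm_nonneg _) hθ, norm_sub_inner_smul_sq hx hy, hxy, sin_sq]

theorem inner_sub_inner_smul_self_left (hx : ‖x‖ = 1) (y : E) : ⟪y - ⟪x, y⟫ • x, x⟫ = 0 := by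
  rw [inner_sub_left, real_inner_smul_left, real_inner_self_eq_norm_sq, hx, real_inner_comm]
  ring

noncomputable def sphereExp (x v : E) : E := cos ‖v‖ • x + sin ‖v‖ • (‖v‖⁻¹ • v)

theorem sphereExp_smul (x : E) {u : E} (hu : ‖u‖ = 1) {t : ℝ} (ht : 0 < t) :
    sphereExp x (t • u) = cos t • x + sin t • u := by
  have hnorm : ‖t • u‖ = t := by rw [norm_smul, hu, mul_one, norm_of_nonneg ht.le]
  rw [sphereExp, hnorm, smul_smul t⁻¹, inv_mul_cancel₀ ht.ne', one_smul]

end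

theorem tendsto_div_two_mul_sin_nhdsNE_zero :
    Tendsto (fun t : ℝ => t / (2 * sin t)) (𝓝[≠] 0) (𝓝 (1 / 2)) := by
  have hlim : Tendsto (fun t => (2 * sinc t)⁻¹) (𝓝[≠] 0) (𝓝 (1 / 2)) := by
    have := ((continuous_sinc.tendsto 0).const_mul 2).inv₀ (by norm_num [sinc_zero])
    simpa [sinc_zero] using this.mono_left nhdsWithin_le_nhds
  refine hlim.congr' (eventually_nhdsWithin_of_forall fun t (ht : t ≠ 0) => ?_)
  rw [sinc_of_ne_zero ht]
  field_simp

/-- **Value of τ reaching the ground truth, and τ_converge = 1/2 on S².**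
For unit vectors `x, y` with `x ⬝ y = cos θ`, `θ ∈ (0, π)`:
`‖y - (x⬝y) x‖ = sin θ`; with `g = 2((x⬝y) x - y)` the Riemannian gradient of
`‖x - y‖²` at `x` and `v = -(θ/(2 sin θ)) g`, the vector `v` is a nonzero
tangent vector at `x` and the Riemannian step `exp_x(v)` reaches `y` exactly;
finally `θ/(2 sin θ) → 1/2` as `θ → 0⁺`. -/
theorem sphere_step_reaches_gt_and_tau_converge
    (x y : EuclideanSpace ℝ (Fin 3)) (hx : ‖x‖ = 1) (hy : ‖y‖ = 1)
    (θ : ℝ) (hθ : θ ∈ Set.Ioo 0 Real.pi) (hxy : ⟪x, y⟫ = Real.cos θ) :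
    ‖y - ⟪x, y⟫ • x‖ = Real.sin θ ∧
      (∀ v : EuclideanSpace ℝ (Fin 3),
        v = -(θ / (2 * Real.sin θ)) • ((2 : ℝ) • (⟪x, y⟫ • x - y)) →
          ⟪v, x⟫ = 0 ∧ v ≠ 0 ∧
            Real.cos ‖v‖ • x + Real.sin ‖v‖ • (‖v‖⁻¹ • v) = y) ∧
      Filter.Tendsto (fun t : ℝ => t / (2 * Real.sin t))
        (nhdsWithin 0 (Set.Ioi 0)) (nhds (1 / 2)) := by
  obtain ⟨hθ0, hθπ⟩ := hθ
  have hsin : 0 < sin θ := sin_pos_of_pos_of_lt_pi hθ0 hθπ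
  have hnorm := norm_sub_inner_smul_eq_sin hx hy hxy hsin.le
  set u := (sin θ)⁻¹ • (y - ⟪x, y⟫ • x)
  have hu : ‖u‖ = 1 := by
    rw [norm_smul, hnorm, norm_inv, norm_of_nonneg hsin.le, inv_mul_cancel₀ hsin.ne']
  refine ⟨hnorm, fun v hv => ?_, tendsto_div_two_mul_sin_nhdsNE_zero.mono_left
    (nhdsWithin_mono 0 fun t (ht : 0 < t) => ht.ne')⟩
  have hvu : v = θ • u := by
    rw [hv]
    match_scalars <;> field_simp
  have hvθ : ‖v‖ = θ := by rw [hvu, norm_smul, hu, mul_one, norm_of_nonneg hθ0.le]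
  refine ⟨?_, norm_pos_iff.mp (hvθ ▸ hθ0), ?_⟩
  · rw [hvu, real_inner_smul_left, real_inner_smul_left, inner_sub_inner_smul_self_left hx,
      mul_zero, mul_zero]
  · change sphereExp x v = y
    rw [hvu, sphereExp_smul x hu hθ0, smul_smul, mul_inv_cancel₀ hsin.ne', one_smul, hxy]
    abel
end
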